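/- arXiv:1010.3451 — 2 statements merged into one kernel-verified Lean document; each statement's English description precedes it below -/
import Mathlib

section
/- Assume Sárközy's theorem: for every δ > 0 there exists M(δ) such that any subset of {1,...,M} with at least δM/2 elements, for M ≥ M(δ), contains two distinct elements differing by a perfect square. Then for every 0 < δ ≤ 1 there exists c(δ) > 0 such that for all sufficiently large N, any A ⊆ {1,...,N} with |A| = δN satisfies ∑_{t=1}^{⌊√N⌋} |A ∩ (A + t²)| ≥ c(δ)·N^{3/2}. -/
open Finset

lemma count_shift (N c : ℕ) (A : Finset ℕ) (hA : A ⊆ Finset.Icc 1 N) :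
    (A.card : ℝ) - c ≤ (((Finset.Icc 1 N).filter (fun x => x + c ∈ A)).card : ℝ) := by
  have h1 : (A.filter (fun a => c < a)).card ≤
      ((Finset.Icc 1 N).filter (fun x => x + c ∈ A)).card := by
    apply Finset.card_le_card_of_injOn (fun a => a - c)
    · intro a ha
      simp only [mem_coe, mem_filter] at ha ⊢
      obtain ⟨haA, hca⟩ := ha
      have h := hA haA
      simp only [mem_Icc] at h ⊢
      refine ⟨⟨by omega, by omega⟩, ?_⟩
      rwa [Nat.sub_add_cancel (le_of_lt hca)]
    · intro a ha b hb hab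
      have hab' : a - c = b - c := hab
      simp only [mem_coe, mem_filter] at ha hb
      omega
  have h2 : A.card ≤ (A.filter (fun a => c < a)).card + c := by
    have heq := Finset.card_filter_add_card_filter_not (s := A) (p := fun a => c < a)
    have h3 : (A.filter (fun a => ¬ c < a)).card ≤ c := by
      refine le_trans (Finset.card_le_card (t := Finset.Icc 1 c) ?_) (by simp)
      intro a ha
      simp only [mem_filter, not_lt] at ha
      have := hA ha.1
      simp only [mem_Icc] at *
      omega
    omega
  have h4 : (A.card : ℝ) ≤
      (((Finset.Icc 1 N).filter (fun x => x + c ∈ A)).card : ℝ) + c := by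
    exact_mod_cast le_trans h2 (by omega)
  linarith

set_option maxHeartbeats 1000000 in
/-- Sárközy's theorem implies a Varnavides-type theorem: if every
dense enough subset of `{1,…,M}` contains a square difference, then every set of
density `δ` in `{1,…,N}` has `≥ c(δ) N^{3/2}` square-difference pairs counted over
all `1 ≤ t ≤ √N`. -/
theorem stmt6
    (sarkozy : ∀ δ : ℝ, 0 < δ → ∃ M₀ : ℕ, ∀ M : ℕ, M₀ ≤ M →
      ∀ B : Finset ℕ, B ⊆ Finset.Icc 1 M → δ * M / 2 ≤ (B.card : ℝ) →
        ∃ a ∈ B, ∃ t : ℕ, 1 ≤ t ∧ a + t ^ 2 ∈ B) :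
    ∀ δ : ℝ, 0 < δ → δ ≤ 1 → ∃ c : ℝ, 0 < c ∧ ∃ N₀ : ℕ, ∀ N : ℕ, N₀ ≤ N →
      ∀ A : Finset ℕ, A ⊆ Finset.Icc 1 N → (A.card : ℝ) = δ * N →
        c * (N : ℝ) ^ ((3 : ℝ) / 2) ≤
          ∑ t ∈ Finset.Icc 1 (Nat.sqrt N),
            ((A ∩ A.image (fun a => a + t ^ 2)).card : ℝ) := by
  classical
  intro δ hδ hδ1
  obtain ⟨M₀, hM₀⟩ := sarkozy δ hδ
  set M : ℕ := max M₀ 2 with hMdef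
  have hM2 : 2 ≤ M := le_max_right _ _
  have hMM₀ : M₀ ≤ M := le_max_left _ _
  have hMpos : (0:ℝ) < M := by exact_mod_cast Nat.lt_of_lt_of_le Nat.zero_lt_two hM2
  set S : ℕ := Nat.sqrt M with hSdef
  have hS1 : 1 ≤ S := by
    rw [hSdef, Nat.le_sqrt]
    omega
  set K : ℕ := M * ⌈(8:ℝ)/δ⌉₊ with hKdef
  have hK8 : (8:ℝ) * M / δ ≤ K := by
    rw [hKdef]
    push_cast
    rw [div_le_iff₀ hδ]
    have h8 : (8:ℝ)/δ ≤ (⌈(8:ℝ)/δ⌉₊ : ℝ) := Nat.le_ceil _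
    rw [div_le_iff₀ hδ] at h8
    nlinarith
  have hKM : M ≤ K := by
    rw [hKdef]
    have : 1 ≤ ⌈(8:ℝ)/δ⌉₊ := by
      rw [Nat.one_le_ceil_iff]
      positivity
    nlinarith
  have hK1 : 1 ≤ K := le_trans (by omega) hKM
  refine ⟨δ / (8 * M * S * Real.sqrt (2 * K)), by positivity, 16 * K, ?_⟩
  intro N hN A hAsub hAcard
  set D : ℕ := Nat.sqrt (N / K) with hDdef
  set q : ℕ := N / K with hqdef
  have hKq : K * q ≤ N := Nat.mul_div_le N K
  have hq16 : 16 ≤ q := by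
    rw [hqdef, Nat.le_div_iff_mul_le (by omega)]
    omega
  -- the count function
  set f : ℕ → ℕ := fun t => (A ∩ A.image (fun a => a + t ^ 2)).card with hfdef
  have hN16 : 16 ≤ N := by omega
  have hNpos : (0:ℝ) < N := by exact_mod_cast by omega
  have key : ∀ d, 1 ≤ d → d ≤ D → δ * N / 4 ≤ (M : ℝ) * ∑ s ∈ Finset.Icc 1 S, (f (s * d) : ℝ) := by
    intro d hd1 hdD
    have hdq : d * d ≤ q := Nat.le_sqrt.mp hdD
    have hd2R : (M:ℝ) * ((d:ℝ)^2) ≤ δ * N / 8 := by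
      have h1 : (K:ℝ) * ((d:ℝ)*(d:ℝ)) ≤ N := by
        exact_mod_cast le_trans (Nat.mul_le_mul_left K hdq) hKq
      rw [div_le_iff₀ hδ] at hK8
      have hd0 : (0:ℝ) ≤ (d:ℝ)*(d:ℝ) := by positivity
      have hsq : ((d:ℝ))^2 = (d:ℝ)*(d:ℝ) := sq (d:ℝ) ▸ (pow_two (d:ℝ))
      rw [hsq]
      nlinarith [mul_le_mul_of_nonneg_right hK8 hd0, mul_le_mul_of_nonneg_left h1 hδ.le]
    set B : ℕ → Finset ℕ := fun x => (Finset.Icc 1 M).filter (fun j => x + (j-1)*d^2 ∈ A) with hBdef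
    have mass : (M:ℝ) * (δ * N) - (M:ℝ) * ((M:ℝ) * (d:ℝ)^2) ≤ ∑ x ∈ Finset.Icc 1 N, ((B x).card : ℝ) := by
      have swap : ∑ x ∈ Finset.Icc 1 N, ((B x).card:ℝ)
          = ∑ j ∈ Finset.Icc 1 M, (((Finset.Icc 1 N).filter (fun x => x + (j-1)*d^2 ∈ A)).card : ℝ) := by
        simp only [hBdef, Finset.card_filter]
        push_cast
        exact Finset.sum_comm
      rw [swap]
      have step : ∀ j ∈ Finset.Icc 1 M, δ * N - (M:ℝ) * (d:ℝ)^2 ≤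
          (((Finset.Icc 1 N).filter (fun x => x + (j-1)*d^2 ∈ A)).card : ℝ) := by
        intro j hj
        have hcs := count_shift N ((j-1)*d^2) A hAsub
        rw [hAcard] at hcs
        have hjM : j ≤ M := (Finset.mem_Icc.mp hj).2
        have hc1 : ((j-1)*d^2 : ℕ) ≤ M * d^2 := Nat.mul_le_mul_right _ (by omega)
        have hc2 : (((j-1)*d^2 : ℕ):ℝ) ≤ (M:ℝ) * (d:ℝ)^2 := by
          calc (((j-1)*d^2 : ℕ):ℝ) ≤ ((M * d^2 : ℕ):ℝ) := by exact_mod_cast hc1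
            _ = (M:ℝ) * (d:ℝ)^2 := by push_cast; ring
        linarith
      calc (M:ℝ)*(δ*N) - (M:ℝ)*((M:ℝ)*(d:ℝ)^2)
            = ∑ _j ∈ Finset.Icc 1 M, (δ*N - (M:ℝ)*(d:ℝ)^2) := by
              rw [Finset.sum_const, Nat.card_Icc, Nat.add_sub_cancel, nsmul_eq_mul]; ring
        _ ≤ _ := Finset.sum_le_sum step
    set Good := (Finset.Icc 1 N).filter (fun x => δ * M / 2 ≤ ((B x).card : ℝ)) with hGdef
    have upper : ∑ x ∈ Finset.Icc 1 N, ((B x).card:ℝ) ≤ (Good.card:ℝ) * M + (N:ℝ) * (δ*M/2) := by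
      rw [← Finset.sum_filter_add_sum_filter_not (Finset.Icc 1 N) (fun x => δ*M/2 ≤ ((B x).card:ℝ))]
      have e1 : ∑ x ∈ Good, ((B x).card:ℝ) ≤ (Good.card:ℝ) * M := by
        calc ∑ x ∈ Good, ((B x).card:ℝ) ≤ ∑ _x ∈ Good, (M:ℝ) := by
              refine Finset.sum_le_sum fun x _ => ?_
              have hle : (B x).card ≤ M := by
                calc (B x).card ≤ (Finset.Icc 1 M).card := Finset.card_le_card (Finset.filter_subset _ _)
                  _ = M := by rw [Nat.card_Icc, Nat.add_sub_cancel]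
              exact_mod_cast hle
          _ = (Good.card:ℝ) * M := by rw [Finset.sum_const, nsmul_eq_mul]
      have e2 : ∑ x ∈ (Finset.Icc 1 N).filter (fun x => ¬ δ*M/2 ≤ ((B x).card:ℝ)), ((B x).card:ℝ)
          ≤ (N:ℝ) * (δ*M/2) := by
        have hnn : (0:ℝ) ≤ δ*M/2 := by positivity
        calc ∑ x ∈ (Finset.Icc 1 N).filter (fun x => ¬ δ*M/2 ≤ ((B x).card:ℝ)), ((B x).card:ℝ)
              ≤ ∑ _x ∈ (Finset.Icc 1 N).filter (fun x => ¬ δ*M/2 ≤ ((B x).card:ℝ)), (δ*M/2) :=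
                Finset.sum_le_sum fun x hx => le_of_lt (not_le.mp (Finset.mem_filter.mp hx).2)
          _ = (((Finset.Icc 1 N).filter (fun x => ¬ δ*M/2 ≤ ((B x).card:ℝ))).card : ℝ) * (δ*M/2) := by
                rw [Finset.sum_const, nsmul_eq_mul]
          _ ≤ (N:ℝ) * (δ*M/2) := by
                refine mul_le_mul_of_nonneg_right ?_ hnn
                have : ((Finset.Icc 1 N).filter (fun x => ¬ δ*M/2 ≤ ((B x).card:ℝ))).card ≤ N := by
                  calc _ ≤ (Finset.Icc 1 N).card := Finset.card_le_card (Finset.filter_subset _ _)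
                    _ = N := by rw [Nat.card_Icc, Nat.add_sub_cancel]
                exact_mod_cast this
      exact le_trans (add_le_add e1 e2) (le_refl _)
    have hGood : δ * N / 4 ≤ (Good.card : ℝ) := by
      nlinarith [mass, upper, hd2R, hMpos, mul_pos hδ hNpos]
    have hpair : ∀ x, ∃ p : (_ : ℕ) × ℕ, x ∈ Good →
        ((1 ≤ p.1 ∧ p.1 ≤ S) ∧ (p.2 ∈ A ∩ A.image (fun a => a + (p.1*d)^2)) ∧
          ∃ j, 1 ≤ j ∧ j ≤ M ∧ x + (j-1)*d^2 + (p.1*d)^2 = p.2) := by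
      intro x
      by_cases hx : x ∈ Good
      · obtain ⟨hxN, hxB⟩ := Finset.mem_filter.mp hx
        obtain ⟨j, hjB, t, ht1, htB⟩ := hM₀ M hMM₀ (B x) (Finset.filter_subset _ _) hxB
        obtain ⟨hjI, hjA⟩ := Finset.mem_filter.mp hjB
        obtain ⟨htI, htA⟩ := Finset.mem_filter.mp htB
        rw [Finset.mem_Icc] at hjI htI
        have heq : x + (j-1)*d^2 + (t*d)^2 = x + (j+t^2-1)*d^2 := by
          have h2 : j - 1 + t^2 = j + t^2 - 1 := by omega
          rw [← h2]
          ring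
        refine ⟨⟨t, x + (j-1)*d^2 + (t*d)^2⟩, fun _ => ⟨⟨ht1, ?_⟩, ?_, j, hjI.1, hjI.2, rfl⟩⟩
        · rw [hSdef, Nat.le_sqrt]
          have hX : t^2 ≤ M := le_trans (Nat.le_add_left (t^2) j) htI.2
          calc t * t = t^2 := (pow_two t).symm
            _ ≤ M := hX
        · refine Finset.mem_inter.mpr ⟨?_, ?_⟩
          · rw [heq]; exact htA
          · exact Finset.mem_image.mpr ⟨x + (j-1)*d^2, hjA, rfl⟩
      · exact ⟨⟨1, 0⟩, fun h => absurd h hx⟩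
    choose g hg using hpair
    set T := (Finset.Icc 1 S).sigma (fun s => A ∩ A.image (fun a => a + (s*d)^2)) with hTdef
    have hmaps : ∀ x ∈ Good, g x ∈ T := by
      intro x hx
      obtain ⟨⟨h1, h2⟩, h3, _⟩ := hg x hx
      exact Finset.mem_sigma.mpr ⟨Finset.mem_Icc.mpr ⟨h1, h2⟩, h3⟩
    have hfib : ∀ p ∈ T, (Good.filter (fun x => g x = p)).card ≤ M := by
      intro p _
      have hsub : Good.filter (fun x => g x = p) ⊆
          (Finset.Icc 1 M).image (fun j => p.2 - (p.1*d)^2 - (j-1)*d^2) := by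
        intro x hx
        obtain ⟨hxG, hxg⟩ := Finset.mem_filter.mp hx
        obtain ⟨_, _, j, hj1, hjM, heq⟩ := hg x hxG
        rw [hxg] at heq
        refine Finset.mem_image.mpr ⟨j, Finset.mem_Icc.mpr ⟨hj1, hjM⟩, ?_⟩
        have h0 : x + (j-1)*d^2 + (p.1*d)^2 = p.2 := heq
        generalize hu : (j-1)*d^2 = u at h0 ⊢
        generalize hv : (p.1*d)^2 = v at h0 ⊢
        omega
      calc (Good.filter (fun x => g x = p)).card
            ≤ ((Finset.Icc 1 M).image (fun j => p.2 - (p.1*d)^2 - (j-1)*d^2)).card :=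
              Finset.card_le_card hsub
        _ ≤ (Finset.Icc 1 M).card := Finset.card_image_le
        _ = M := by rw [Nat.card_Icc, Nat.add_sub_cancel]
    have hGT : Good.card ≤ M * T.card := Finset.card_le_mul_card_image_of_maps_to hmaps M hfib
    have hTcard : T.card = ∑ s ∈ Finset.Icc 1 S, f (s*d) := by
      rw [hTdef, Finset.card_sigma]
    calc δ * N / 4 ≤ (Good.card : ℝ) := hGood
      _ ≤ ((M * T.card : ℕ) : ℝ) := by exact_mod_cast hGT
      _ = (M : ℝ) * ∑ s ∈ Finset.Icc 1 S, (f (s*d) : ℝ) := by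
          rw [hTcard]; push_cast; ring
  -- sum over d
  have sum1 : (D : ℝ) * (δ * N / 4) ≤ (M : ℝ) * ∑ d ∈ Finset.Icc 1 D, ∑ s ∈ Finset.Icc 1 S, (f (s * d) : ℝ) := by
    rw [Finset.mul_sum]
    calc (D : ℝ) * (δ * N / 4) = ∑ _d ∈ Finset.Icc 1 D, δ * N / 4 := by
          rw [Finset.sum_const, Nat.card_Icc]; simp [nsmul_eq_mul]
      _ ≤ _ := Finset.sum_le_sum (fun d hd => by
          have := key d (Finset.mem_Icc.mp hd).1 (Finset.mem_Icc.mp hd).2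
          exact this)
  have sum2 : ∑ d ∈ Finset.Icc 1 D, ∑ s ∈ Finset.Icc 1 S, (f (s * d) : ℝ) ≤
      (S : ℝ) * ∑ t ∈ Finset.Icc 1 (Nat.sqrt N), (f t : ℝ) := by
    rw [Finset.sum_comm]
    have inner : ∀ s ∈ Finset.Icc 1 S, ∑ d ∈ Finset.Icc 1 D, (f (s*d):ℝ) ≤
        ∑ t ∈ Finset.Icc 1 (Nat.sqrt N), (f t:ℝ) := by
      intro s hs
      obtain ⟨hs1, hsS⟩ := Finset.mem_Icc.mp hs
      have hinj : ∀ x ∈ Finset.Icc 1 D, ∀ y ∈ Finset.Icc 1 D, s * x = s * y → x = y := by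
        intro x _ y _ h
        exact Nat.eq_of_mul_eq_mul_left (by omega) h
      have himg : ∑ t ∈ (Finset.Icc 1 D).image (fun d => s * d), (f t:ℝ)
          = ∑ d ∈ Finset.Icc 1 D, (f (s*d):ℝ) := Finset.sum_image hinj
      rw [← himg]
      refine Finset.sum_le_sum_of_subset_of_nonneg ?_ (fun _ _ _ => by positivity)
      intro t ht
      obtain ⟨d, hd, rfl⟩ := Finset.mem_image.mp ht
      obtain ⟨hd1, hdD⟩ := Finset.mem_Icc.mp hd
      refine Finset.mem_Icc.mpr ⟨by simpa using Nat.mul_le_mul hs1 hd1, ?_⟩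
      rw [Nat.le_sqrt]
      have hss : s * s ≤ M := Nat.le_sqrt.mp hsS
      have hdd : d * d ≤ q := Nat.le_sqrt.mp hdD
      calc s * d * (s * d) = (s * s) * (d * d) := by ring
        _ ≤ M * q := Nat.mul_le_mul hss hdd
        _ ≤ K * q := Nat.mul_le_mul_right q hKM
        _ ≤ N := hKq
    calc ∑ s ∈ Finset.Icc 1 S, ∑ d ∈ Finset.Icc 1 D, (f (s*d):ℝ)
          ≤ ∑ _s ∈ Finset.Icc 1 S, ∑ t ∈ Finset.Icc 1 (Nat.sqrt N), (f t:ℝ) :=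
            Finset.sum_le_sum inner
      _ = (S : ℝ) * ∑ t ∈ Finset.Icc 1 (Nat.sqrt N), (f t : ℝ) := by
          rw [Finset.sum_const, Nat.card_Icc, Nat.add_sub_cancel, nsmul_eq_mul]
  have hD2 : Real.sqrt N / (2 * Real.sqrt (2 * K)) ≤ (D : ℝ) := by
    have hq1 : 1 ≤ q := by omega
    have hNle : (N:ℕ) ≤ 2 * (K * q) := by
      have hmod := Nat.div_add_mod N K
      have hr : N % K < K := Nat.mod_lt _ (by omega)
      have hKKq : K ≤ K * q := Nat.le_mul_of_pos_right K (by omega)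
      calc N = K * (N / K) + N % K := (Nat.div_add_mod N K).symm
        _ = K * q + N % K := rfl
        _ ≤ K * q + K := by omega
        _ ≤ K * q + K * q := by omega
        _ = 2 * (K * q) := by ring
    have hsqN : Real.sqrt N ≤ Real.sqrt (2 * K) * Real.sqrt q := by
      rw [← Real.sqrt_mul (by positivity)]
      apply Real.sqrt_le_sqrt
      have : (N:ℝ) ≤ 2 * (K * q) := by exact_mod_cast hNle
      linarith
    have h4 : (4:ℝ) ≤ Real.sqrt q := by
      have h16 : Real.sqrt 16 ≤ Real.sqrt q := Real.sqrt_le_sqrt (by exact_mod_cast hq16)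
      have : Real.sqrt 16 = 4 := by
        rw [show (16:ℝ) = 4^2 by norm_num, Real.sqrt_sq (by norm_num)]
      linarith
    have hDq : Real.sqrt q ≤ (D:ℝ) + 1 := by
      have hlt : q < (D+1) * (D+1) := Nat.lt_succ_sqrt q
      have hle : (q:ℝ) ≤ ((D:ℝ)+1)^2 := by
        have : (q:ℝ) ≤ ((D+1)*(D+1) : ℕ) := by exact_mod_cast hlt.le
        push_cast at this ⊢
        nlinarith
      calc Real.sqrt q ≤ Real.sqrt (((D:ℝ)+1)^2) := Real.sqrt_le_sqrt hle
        _ = (D:ℝ)+1 := Real.sqrt_sq (by positivity)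
    have hqD : Real.sqrt q ≤ 2 * (D:ℝ) := by linarith
    have h2K : (0:ℝ) < Real.sqrt (2 * K) := Real.sqrt_pos.mpr (by positivity)
    rw [div_le_iff₀ (by positivity)]
    calc Real.sqrt N ≤ Real.sqrt (2*K) * Real.sqrt q := hsqN
      _ ≤ Real.sqrt (2*K) * (2 * D) := by nlinarith
      _ = (D:ℝ) * (2 * Real.sqrt (2*K)) := by ring
  set P := ∑ t ∈ Finset.Icc 1 (Nat.sqrt N), (f t : ℝ) with hPdef
  have hPnn : 0 ≤ P := Finset.sum_nonneg fun t _ => by positivity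
  have h1 : (D:ℝ) * (δ * N / 4) ≤ (M:ℝ) * ((S:ℝ) * P) :=
    le_trans sum1 (mul_le_mul_of_nonneg_left sum2 (by positivity))
  have hrw : (N : ℝ) ^ ((3:ℝ)/2) = (N:ℝ) * Real.sqrt N := by
    rw [show ((3:ℝ)/2) = 1 + 1/2 by norm_num, Real.rpow_add hNpos, Real.rpow_one,
      Real.sqrt_eq_rpow]
  rw [hrw]
  have h2 : Real.sqrt N ≤ 2 * Real.sqrt (2*K) * D := by
    rw [div_le_iff₀ (by positivity)] at hD2
    linarith
  have hsN : (0:ℝ) ≤ Real.sqrt N := Real.sqrt_nonneg _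
  have h2Knn : (0:ℝ) ≤ Real.sqrt (2*K) := Real.sqrt_nonneg _
  rw [div_mul_eq_mul_div, div_le_iff₀ (by positivity)]
  nlinarith [mul_le_mul_of_nonneg_left h2 (mul_nonneg hδ.le hNpos.le),
    mul_le_mul_of_nonneg_left h1 (mul_nonneg (by norm_num : (0:ℝ) ≤ 8) h2Knn)]
end

section
/- Let ψ be Schwartz on ℝ with bounded derivative, q, L ∈ ℕ with L ≥ q, and define ψ_{q,L}(q²ℓ) = (q/L)²ψ(q²ℓ/L²) (zero off q²ℤ). If q | t and t² ≤ 4η²L² where L = η^{-1}λ and λ < t ≤ λ + μ ≤ 2λ, then ∑_{ℓ∈ℤ} |ψ_{q,L}(q²ℓ − t²) − ψ_{q,L}(q²ℓ)| ≤ c·η² for a constant c depending only on ψ. -/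
open MeasureTheory


/-- The sampled kernel `ψ_{q,L}` on ℤ: `ψ_{q,L}(q²ℓ) = (q/L)² ψ(q²ℓ/L²)`, zero off `q²ℤ`. -/
noncomputable def psiqL (ψ : ℝ → ℝ) (q : ℕ) (L : ℝ) (x : ℤ) : ℝ :=
  if (q : ℤ) ^ 2 ∣ x then ((q : ℝ) / L) ^ 2 * ψ ((x : ℝ) / L ^ 2) else 0


lemma stmt15_key (ψ : SchwartzMap ℝ ℝ) (h : ℝ) (hh : 0 ≤ h) (m : ℕ) (s : Finset ℤ) :
    ∑ k ∈ s, |ψ (((k : ℝ) - (m : ℝ)) * h) - ψ ((k : ℝ) * h)|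
      ≤ (m : ℝ) * ∫ x, |deriv (⇑ψ) x| := by
  have hcoe : ⇑(SchwartzMap.derivCLM ℝ ℝ ψ) = deriv (⇑ψ) := by
    funext x; exact SchwartzMap.derivCLM_apply ℝ ψ x
  have hcont : Continuous (deriv (⇑ψ)) := hcoe ▸ (SchwartzMap.derivCLM ℝ ℝ ψ).continuous
  have hint : Integrable (fun x => |deriv (⇑ψ) x|) := by
    have := ((SchwartzMap.derivCLM ℝ ℝ ψ).integrable (μ := volume)).abs
    simpa [hcoe] using this
  set g : ℝ → ℝ := fun x => |deriv (⇑ψ) x| with hg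
  -- per-k bound
  have hk : ∀ k : ℤ, |ψ (((k : ℝ) - (m : ℝ)) * h) - ψ ((k : ℝ) * h)|
      ≤ ∑ j ∈ Finset.range m, ∫ x in Set.Ioc (((k:ℝ) - m + j) * h) (((k:ℝ) - m + j + 1) * h), g x := by
    intro k
    set a : ℕ → ℝ := fun j => ((k : ℝ) - m + j) * h with ha
    have ha0 : a 0 = ((k:ℝ) - m) * h := by simp [ha]
    have ham : a m = (k : ℝ) * h := by simp [ha]
    have hmono : ∀ j : ℕ, a j ≤ a (j + 1) := by
      intro j
      apply mul_le_mul_of_nonneg_right _ hh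
      push_cast; linarith
    have hintj : ∀ j, j < m → IntervalIntegrable (deriv (⇑ψ)) volume (a j) (a (j+1)) :=
      fun j _ => hcont.intervalIntegrable _ _
    have hftc : ∫ x in (a 0)..(a m), deriv (⇑ψ) x = ψ (a m) - ψ (a 0) := by
      apply intervalIntegral.integral_deriv_eq_sub
      · exact fun x _ => (ψ.differentiable).differentiableAt
      · exact hcont.intervalIntegrable _ _
    have h0m : a 0 ≤ a m := by
      rw [ha0, ham]
      apply mul_le_mul_of_nonneg_right _ hh
      linarith
    calc |ψ (((k : ℝ) - (m : ℝ)) * h) - ψ ((k : ℝ) * h)|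
        = |∫ x in (a 0)..(a m), deriv (⇑ψ) x| := by
          rw [hftc, ha0, ham, abs_sub_comm]
      _ ≤ ∫ x in (a 0)..(a m), |deriv (⇑ψ) x| :=
          intervalIntegral.abs_integral_le_integral_abs h0m
      _ = ∑ j ∈ Finset.range m, ∫ x in (a j)..(a (j+1)), g x :=
          (intervalIntegral.sum_integral_adjacent_intervals
            (fun j _ => (hcont.abs).intervalIntegrable _ _)).symm
      _ = ∑ j ∈ Finset.range m, ∫ x in Set.Ioc (((k:ℝ) - m + j) * h) (((k:ℝ) - m + j + 1) * h), g x := by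
          refine Finset.sum_congr rfl fun j _ => ?_
          rw [intervalIntegral.integral_of_le (hmono j)]
          congr 1 <;> simp [ha] <;> push_cast <;> ring
  calc ∑ k ∈ s, |ψ (((k : ℝ) - (m : ℝ)) * h) - ψ ((k : ℝ) * h)|
      ≤ ∑ k ∈ s, ∑ j ∈ Finset.range m,
          ∫ x in Set.Ioc (((k:ℝ) - m + j) * h) (((k:ℝ) - m + j + 1) * h), g x :=
        Finset.sum_le_sum fun k _ => hk k
    _ = ∑ j ∈ Finset.range m, ∑ k ∈ s,
          ∫ x in Set.Ioc (((k:ℝ) - m + j) * h) (((k:ℝ) - m + j + 1) * h), g x :=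
        Finset.sum_comm
    _ ≤ ∑ j ∈ Finset.range m, ∫ x, g x := by
        refine Finset.sum_le_sum fun j _ => ?_
        set T : ℤ → Set ℝ := fun k => Set.Ioc (((k:ℝ) - m + j) * h) (((k:ℝ) - m + j + 1) * h) with hT
        have hmeas : ∀ k ∈ s, MeasurableSet (T k) := fun k _ => measurableSet_Ioc
        have hdisj : Set.Pairwise ↑s (Function.onFun Disjoint T) := by
          intro k _ k' _ hkk'
          have key : ∀ (a b : ℤ), a < b → Disjoint (T a) (T b) := by
            intro a b hab
            rw [hT]
            rw [Set.Ioc_disjoint_Ioc]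
            refine le_trans (min_le_left _ _) (le_trans ?_ (le_max_right _ _))
            apply mul_le_mul_of_nonneg_right _ hh
            have : (a : ℝ) + 1 ≤ b := by exact_mod_cast hab
            linarith
          rcases lt_or_gt_of_ne hkk' with hlt | hgt
          · exact key _ _ hlt
          · exact (key _ _ hgt).symm
        have hion : ∀ k ∈ s, IntegrableOn g (T k) := fun k _ => hint.integrableOn
        calc ∑ k ∈ s, ∫ x in T k, g x = ∫ x in (⋃ k ∈ s, T k), g x :=
              (integral_biUnion_finset s hmeas hdisj hion).symm
          _ ≤ ∫ x, g x := by
              apply setIntegral_le_integral hint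
              filter_upwards with x using abs_nonneg _
    _ = (m : ℝ) * ∫ x, g x := by simp [Finset.sum_const, mul_comm]

/-- almost translation-invariance of the sampled Schwartz kernel:
shifting by `t²` (with `q ∣ t`, `t² ≤ 4η²L²`, `L = η⁻¹λ`, `λ < t ≤ λ+μ ≤ 2λ`)
changes the kernel in ℓ¹ by at most `c·η²`, with `c` depending only on `ψ`. -/
theorem stmt15 (ψ : SchwartzMap ℝ ℝ) :
    ∃ c : ℝ, 0 < c ∧ ∀ (q L l m t : ℕ) (η : ℝ), 0 < η → q ≤ L → q ∣ t →
      (L : ℝ) = η⁻¹ * l → (t : ℝ) ^ 2 ≤ 4 * η ^ 2 * (L : ℝ) ^ 2 →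
      l < t → t ≤ l + m → l + m ≤ 2 * l →
      (∑' k : ℤ, |psiqL (fun x => ψ x) q L ((q : ℤ) ^ 2 * k - (t : ℤ) ^ 2)
          - psiqL (fun x => ψ x) q L ((q : ℤ) ^ 2 * k)|) ≤ c * η ^ 2 := by
  set V : ℝ := ∫ x, |deriv (⇑ψ) x| with hV
  have hV0 : 0 ≤ V := integral_nonneg fun x => abs_nonneg _
  refine ⟨4 * (V + 1), by positivity, ?_⟩
  intro q L l m t η hη hqL hqt hLdef ht2 hlt htlm hlm2
  have hq0 : q ≠ 0 := by
    rintro rfl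
    rw [zero_dvd_iff] at hqt
    omega
  have hL1 : 1 ≤ L := le_trans (Nat.one_le_iff_ne_zero.2 hq0) hqL
  have hLpos : (0:ℝ) < (L:ℝ) := by exact_mod_cast hL1
  obtain ⟨r, rfl⟩ := hqt
  set h : ℝ := (q:ℝ)^2 / (L:ℝ)^2 with hh
  have hhpos : 0 < h := by positivity
  have hterm : ∀ k : ℤ,
      |psiqL (fun x => ψ x) q L ((q : ℤ) ^ 2 * k - ((q*r : ℕ) : ℤ) ^ 2)
        - psiqL (fun x => ψ x) q L ((q : ℤ) ^ 2 * k)|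
      = h * |ψ (((k : ℝ) - ((r^2 : ℕ) : ℝ)) * h) - ψ ((k : ℝ) * h)| := by
    intro k
    have hd1 : (q : ℤ)^2 ∣ ((q : ℤ) ^ 2 * k - ((q*r : ℕ) : ℤ) ^ 2) :=
      ⟨k - (r:ℤ)^2, by push_cast; ring⟩
    have hd2 : (q : ℤ)^2 ∣ ((q : ℤ) ^ 2 * k) := ⟨k, rfl⟩
    rw [psiqL, psiqL, if_pos hd1, if_pos hd2]
    have e1 : ((((q : ℤ) ^ 2 * k - ((q*r : ℕ) : ℤ) ^ 2 : ℤ)) : ℝ) / (L:ℝ)^2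
        = ((k : ℝ) - ((r^2 : ℕ) : ℝ)) * h := by
      rw [hh]; push_cast; field_simp
    have e2 : ((((q : ℤ) ^ 2 * k : ℤ)) : ℝ) / (L:ℝ)^2 = (k : ℝ) * h := by
      rw [hh]; push_cast; field_simp
    have e3 : ((q:ℝ)/(L:ℝ))^2 = h := by rw [hh, div_pow]
    rw [e1, e2, e3, ← mul_sub, abs_mul, abs_of_pos hhpos]
  have hbound : h * ((r^2 : ℕ) : ℝ) ≤ 4 * η^2 := by
    have : ((q*r : ℕ) : ℝ)^2 ≤ 4 * η^2 * (L:ℝ)^2 := ht2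
    rw [hh, div_mul_eq_mul_div, div_le_iff₀ (by positivity)]
    push_cast at this ⊢
    nlinarith [this]
  rw [tsum_congr hterm]
  refine tsum_le_of_sum_le' (by positivity) fun s => ?_
  calc ∑ k ∈ s, h * |ψ (((k : ℝ) - ((r^2 : ℕ) : ℝ)) * h) - ψ ((k : ℝ) * h)|
      = h * ∑ k ∈ s, |ψ (((k : ℝ) - ((r^2 : ℕ) : ℝ)) * h) - ψ ((k : ℝ) * h)| :=
        (Finset.mul_sum _ _ _).symm
    _ ≤ h * (((r^2 : ℕ) : ℝ) * V) :=
        mul_le_mul_of_nonneg_left (stmt15_key ψ h hhpos.le (r^2) s) hhpos.le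
    _ = (h * ((r^2 : ℕ) : ℝ)) * V := by ring
    _ ≤ (4 * η^2) * V := mul_le_mul_of_nonneg_right hbound hV0
    _ ≤ 4 * (V + 1) * η^2 := by nlinarith
end
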